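/- arXiv:1108.0164 — 3 statements merged into one kernel-verified Lean document; each statement's English description precedes it below -/
import Mathlib

section
/- Let G be a group and M = G'/G'' its Alexander invariant. For any x, y, z ∈ G the Jacobian relation (t_x − 1)·[y,z] + (t_y − 1)·[z,x] + (t_z − 1)·[x,y] = 0 holds in M. -/
open scoped commutatorElement

theorem comm_mem'' {G : Type*} [Group G] (a b : G) : ⁅a, b⁆ ∈ commutator G :=
  Subgroup.commutator_mem_commutator (Subgroup.mem_top a) (Subgroup.mem_top b)

theorem conj_comm_mem'' {G : Type*} [Group G] (g a b : G) :
    g * ⁅a, b⁆ * g⁻¹ ∈ commutator G :=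
  (Subgroup.commutator_normal ⊤ ⊤).conj_mem _ (comm_mem'' a b) g

/-!
Both sides of `x⁅y,z⁆x⁻¹ · ⁅z,x⁆⁻¹ = ⁅x,y⁆ · (y⁅z,x⁆y⁻¹)⁻¹ · ⁅y,z⁆ · (z⁅x,y⁆z⁻¹)⁻¹` expand to
`⁅x * y, z⁆`. All six factors lie in `G'`, so this identity passes to the abelian group `G'/G''`,
where rearranging it gives the Jacobian relation.
-/

theorem conj_commutatorElement_mul_inv_commutatorElement {G : Type*} [Group G] (x y z : G) :
    x * ⁅y, z⁆ * x⁻¹ * ⁅z, x⁆⁻¹ =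
      ⁅x, y⁆ * (y * ⁅z, x⁆ * y⁻¹)⁻¹ * ⁅y, z⁆ * (z * ⁅x, y⁆ * z⁻¹)⁻¹ := by
  simp only [commutatorElement_def]
  group

theorem mul_inv_mul_mul_inv_mul_mul_inv_eq_one {M : Type*} [CommGroup M] {a b c a' b' c' : M}
    (h : a * b'⁻¹ = c' * b⁻¹ * a' * c⁻¹) : a * a'⁻¹ * (b * b'⁻¹) * (c * c'⁻¹) = 1 := by
  calc a * a'⁻¹ * (b * b'⁻¹) * (c * c'⁻¹) = a * b'⁻¹ * (c' * b⁻¹ * a' * c⁻¹)⁻¹ := by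
        simp only [mul_inv_rev, inv_inv, mul_comm, mul_left_comm, mul_assoc]
    _ = 1 := by rw [h, mul_inv_cancel]

/-- the Jacobian relation
`(t_x − 1)·[y,z] + (t_y − 1)·[z,x] + (t_z − 1)·[x,y] = 0`
holds in the Alexander invariant `M = G'/G''`, written multiplicatively:
`(x[y,z]x⁻¹)[y,z]⁻¹ · (y[z,x]y⁻¹)[z,x]⁻¹ · (z[x,y]z⁻¹)[x,y]⁻¹ = 1`. -/
theorem statement2 {G : Type*} [Group G] (x y z : G) :
    Abelianization.of (⟨x * ⁅y, z⁆ * x⁻¹, conj_comm_mem'' x y z⟩ : commutator G) *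
      (Abelianization.of (⟨⁅y, z⁆, comm_mem'' y z⟩ : commutator G))⁻¹ *
    (Abelianization.of (⟨y * ⁅z, x⁆ * y⁻¹, conj_comm_mem'' y z x⟩ : commutator G) *
      (Abelianization.of (⟨⁅z, x⁆, comm_mem'' z x⟩ : commutator G))⁻¹) *
    (Abelianization.of (⟨z * ⁅x, y⁆ * z⁻¹, conj_comm_mem'' z x y⟩ : commutator G) *
      (Abelianization.of (⟨⁅x, y⁆, comm_mem'' x y⟩ : commutator G))⁻¹) = 1 := by
  apply mul_inv_mul_mul_inv_mul_mul_inv_eq_one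
  simp only [← map_inv, ← map_mul]
  congr 1
  exact Subtype.ext (conj_commutatorElement_mul_inv_commutatorElement x y z)
end

section
/- Let A_r be the (r choose 3) × (r choose 2) matrix over ℂ whose rows, indexed by triples 1 ≤ i < j < k ≤ r, have entry t_k − 1 in column (i,j), entry −(t_j − 1) in column (i,k), entry t_i − 1 in column (j,k), and 0 elsewhere, where t₁, …, t_r ∈ ℂ. If t_i ≠ 1 for all i, then rank A_r = ((r−1) choose 2). -/
/-!
The rows of `A_r` are the coordinates of `v ↦ w ∧ v` from `Λ²ℂʳ` to `Λ³ℂʳ`, where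
`w = (t₁ - 1, …, t_r - 1)`. Since `w ≠ 0`, the Koszul complex `ℂ → ℂʳ → Λ²ℂʳ → Λ³ℂʳ` of
wedging with `w` is exact, so the kernel of `A_r` is the image of `s ↦ w ∧ s`, of dimension
`r - 1`, and `rank A_r = (r choose 2) - (r - 1) = (r - 1 choose 2)`.
-/

open Matrix

/-- The matrix of Jacobian relations of the free group `F_r`: rows indexed by triples
`i < j < k`, columns by pairs `a < b`, with entry `t_k − 1` in column `(i,j)`,
`−(t_j − 1)` in column `(i,k)`, `t_i − 1` in column `(j,k)`, and `0` elsewhere. -/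
def jacobianMatrix (r : ℕ) (t : Fin r → ℂ) :
    Matrix {p : Fin r × Fin r × Fin r // p.1 < p.2.1 ∧ p.2.1 < p.2.2}
           {q : Fin r × Fin r // q.1 < q.2} ℂ :=
  fun row col =>
    let i := row.1.1; let j := row.1.2.1; let k := row.1.2.2
    let a := col.1.1; let b := col.1.2
    if a = i ∧ b = j then t k - 1
    else if a = i ∧ b = k then -(t j - 1)
    else if a = j ∧ b = k then t i - 1
    else 0

abbrev IncreasingPairs (r : ℕ) := {q : Fin r × Fin r // q.1 < q.2}

abbrev IncreasingTriples (r : ℕ) := {p : Fin r × Fin r × Fin r // p.1 < p.2.1 ∧ p.2.1 < p.2.2}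

lemma card_increasingPairs (r : ℕ) : Fintype.card (IncreasingPairs r) = r.choose 2 := by
  rw [Fintype.card_subtype, Fintype.card_product_filter_lt, Fintype.card_fin]

/-- `s ↦ w ∧ s`, in the coordinates `e_a ∧ e_b`, `a < b`, of `Λ² Kʳ`. -/
def wedgeLeft {K : Type*} [CommRing K] {r : ℕ} (w : Fin r → K) :
    (Fin r → K) →ₗ[K] (IncreasingPairs r → K) where
  toFun s q := w q.1.1 * s q.1.2 - w q.1.2 * s q.1.1
  map_add' s u := by funext q; simp only [Pi.add_apply]; ring
  map_smul' c s := by funext q; simp only [Pi.smul_apply, smul_eq_mul, RingHom.id_apply]; ring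

section Koszul

variable {K : Type*} [Field K] {r : ℕ} [NeZero r] {w : Fin r → K}

lemma ker_wedgeLeft (hw : w 0 ≠ 0) : LinearMap.ker (wedgeLeft w) = K ∙ w := by
  refine le_antisymm (fun s hs => ?_) ?_
  · refine Submodule.mem_span_singleton.mpr ⟨s 0 / w 0, funext fun b => ?_⟩
    rcases eq_or_ne b 0 with rfl | hb
    · simp [field]
    · have hrel := congrFun (LinearMap.mem_ker.mp hs) ⟨(0, b), Fin.pos_iff_ne_zero.mpr hb⟩
      simp only [wedgeLeft, LinearMap.coe_mk, AddHom.coe_mk, Pi.zero_apply] at hrel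
      simp only [Pi.smul_apply, smul_eq_mul]
      field_simp
      linear_combination -hrel
  · rw [Submodule.span_le, Set.singleton_subset_iff, SetLike.mem_coe, LinearMap.mem_ker]
    funext q
    simp only [wedgeLeft, LinearMap.coe_mk, AddHom.coe_mk, Pi.zero_apply]
    ring

lemma finrank_range_wedgeLeft_add_one (hw : w 0 ≠ 0) :
    Module.finrank K (LinearMap.range (wedgeLeft w)) + 1 = r := by
  have hker : Module.finrank K (LinearMap.ker (wedgeLeft w)) = 1 := by
    rw [ker_wedgeLeft hw]
    exact finrank_span_singleton fun h => hw (congrFun h 0)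
  rw [← hker, LinearMap.finrank_range_add_finrank_ker, Module.finrank_fin_fun]

end Koszul

lemma jacobianMatrix_mulVec_apply {r : ℕ} (t : Fin r → ℂ) (v : IncreasingPairs r → ℂ)
    (p : IncreasingTriples r) :
    (jacobianMatrix r t *ᵥ v) p =
      (t p.1.2.2 - 1) * v ⟨(p.1.1, p.1.2.1), p.2.1⟩
      - (t p.1.2.1 - 1) * v ⟨(p.1.1, p.1.2.2), p.2.1.trans p.2.2⟩
      + (t p.1.1 - 1) * v ⟨(p.1.2.1, p.1.2.2), p.2.2⟩ := by
  obtain ⟨⟨i, j, k⟩, hij, hjk⟩ := p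
  have hrow : ∀ q : IncreasingPairs r, jacobianMatrix r t ⟨(i, j, k), hij, hjk⟩ q * v q =
      (if q = ⟨(i, j), hij⟩ then (t k - 1) * v q else 0)
      + (if q = ⟨(i, k), hij.trans hjk⟩ then -(t j - 1) * v q else 0)
      + (if q = ⟨(j, k), hjk⟩ then (t i - 1) * v q else 0) := by
    rintro ⟨⟨a, b⟩, hab⟩
    simp only [jacobianMatrix, Subtype.mk.injEq, Prod.mk.injEq]
    split_ifs <;> simp_all only [lt_irrefl] <;> ring
  simp only [mulVec, dotProduct, hrow, Finset.sum_add_distrib, Fintype.sum_ite_eq']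
  ring

lemma ker_mulVecLin_jacobianMatrix {r : ℕ} [NeZero r] {t : Fin r → ℂ} (ht : t 0 ≠ 1) :
    LinearMap.ker (jacobianMatrix r t).mulVecLin = LinearMap.range (wedgeLeft (t · - 1)) := by
  have hw : t 0 - 1 ≠ 0 := sub_ne_zero.mpr ht
  refine le_antisymm (fun v hv => ?_) ?_
  · have hrel (p : IncreasingTriples r) := congrFun (LinearMap.mem_ker.mp hv) p
    simp only [mulVecLin_apply, Pi.zero_apply, jacobianMatrix_mulVec_apply] at hrel
    -- the pivot row `(0, a, b)` solves for `v (a, b)` in terms of the `v (0, ·)`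
    refine ⟨fun b => if h : 0 < b then v ⟨(0, b), h⟩ / (t 0 - 1) else 0, funext ?_⟩
    rintro ⟨⟨a, b⟩, hab⟩
    simp only [wedgeLeft, LinearMap.coe_mk, AddHom.coe_mk]
    rcases eq_or_ne a 0 with rfl | ha
    · rw [dif_pos hab, dif_neg (lt_irrefl 0)]
      field_simp
      ring
    · have ha' : 0 < a := Fin.pos_iff_ne_zero.mpr ha
      rw [dif_pos ha', dif_pos (ha'.trans hab)]
      field_simp
      linear_combination -hrel ⟨(0, a, b), ha', hab⟩
  · rintro v ⟨s, rfl⟩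
    rw [LinearMap.mem_ker, mulVecLin_apply]
    funext p
    simp only [jacobianMatrix_mulVec_apply, wedgeLeft, LinearMap.coe_mk, AddHom.coe_mk,
      Pi.zero_apply]
    ring

lemma rank_jacobianMatrix_add {r : ℕ} [NeZero r] {t : Fin r → ℂ} (ht : t 0 ≠ 1) :
    (jacobianMatrix r t).rank + (r - 1) = r.choose 2 := by
  have hrange := finrank_range_wedgeLeft_add_one (w := (t · - 1)) (sub_ne_zero.mpr ht)
  have hnullity := LinearMap.finrank_range_add_finrank_ker (jacobianMatrix r t).mulVecLin
  rw [ker_mulVecLin_jacobianMatrix ht, Module.finrank_pi, card_increasingPairs] at hnullity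
  rw [rank, ← hnullity, ← Nat.eq_sub_of_add_eq hrange]

/-- if `t_i ≠ 1` for all `i`, then the matrix `A_r` of Jacobian relations
has rank `(r−1 choose 2)`. -/
theorem statement10 (r : ℕ) (hr : 3 ≤ r) (t : Fin r → ℂ) (ht : ∀ i, t i ≠ 1) :
    (jacobianMatrix r t).rank = (r - 1).choose 2 := by
  obtain ⟨n, rfl⟩ : ∃ n, r = n + 1 := ⟨r - 1, by omega⟩
  have h := rank_jacobianMatrix_add (ht 0)
  rw [Nat.choose_succ_succ', Nat.choose_one_right] at h
  simpa [add_comm] using h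
end

section
/- Let G be the free group on x₁, …, x_r with r ≥ 2. The quotient map G → G/G' induces a presentation of the module M = G'/G'' over ℤ[G/G'] ≅ ℤ[t₁^{±1},…,t_r^{±1}] generated by the classes of the commutators x_{ij} = [x_i, x_j] for 1 ≤ i < j ≤ r. -/
/-!
Modulo the normal closure `N` of the commutators `[x_i, x_j]`, `i < j`, the generators of a
group commute pairwise (`[x_j, x_i] = [x_i, x_j]⁻¹`), so the quotient is abelian and `N` contains
the commutator subgroup `G'`. Hence `G'` is generated by the conjugates `g [x_i, x_j] g⁻¹`, and
so is its abelianization `G'/G''`; conjugation by `g` is the action of the class of `g` in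
`ℤ[G/G']`.
-/

open scoped commutatorElement

theorem conj_comm_mem15 {G : Type*} [Group G] (g a b : G) :
    g * ⁅a, b⁆ * g⁻¹ ∈ commutator G :=
  (Subgroup.commutator_normal ⊤ ⊤).conj_mem _
    (Subgroup.commutator_mem_commutator (Subgroup.mem_top a) (Subgroup.mem_top b)) g

open Subgroup

variable {G : Type*} [Group G]

theorem isMulCommutative_of_closure_eq_top {X : Set G} (hX : closure X = ⊤)
    (hcomm : ∀ x ∈ X, ∀ y ∈ X, x * y = y * x) : IsMulCommutative G := by
  have hcentralizer := closure_le_centralizer_centralizer X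
  rw [hX] at hcentralizer
  exact ⟨⟨fun a b ↦ Set.centralizer_centralizer_comm_of_comm hcomm
    a (hcentralizer (mem_top a)) b (hcentralizer (mem_top b))⟩⟩

theorem commutator_eq_normalClosure_of_closure_range_eq_top {ι : Type*} [LinearOrder ι]
    {x : ι → G} (hx : closure (Set.range x) = ⊤) :
    commutator G = normalClosure {c | ∃ i j, i < j ∧ ⁅x i, x j⁆ = c} := by
  set N := normalClosure {c | ∃ i j, i < j ∧ ⁅x i, x j⁆ = c}
  have hbasic (i j : ι) : ⁅x i, x j⁆ ∈ N := by
    rcases lt_trichotomy i j with hij | rfl | hji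
    · exact subset_normalClosure ⟨i, j, hij, rfl⟩
    · rw [commutatorElement_self]
      exact one_mem N
    · rw [← commutatorElement_inv]
      exact inv_mem (subset_normalClosure ⟨j, i, hji, rfl⟩)
  refine le_antisymm (Normal.quotient_commutative_iff_commutator_le.mp ?_)
    (normalClosure_le_normal ?_)
  · refine isMulCommutative_of_closure_eq_top (X := Set.range (QuotientGroup.mk' N ∘ x)) ?_ ?_
    · rw [Set.range_comp, ← MonoidHom.map_closure, hx,
        map_top_of_surjective _ (QuotientGroup.mk'_surjective N)]
    · rintro _ ⟨i, rfl⟩ _ ⟨j, rfl⟩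
      rw [← commutatorElement_eq_one_iff_mul_comm, Function.comp_apply, Function.comp_apply,
        ← map_commutatorElement, QuotientGroup.mk'_apply, QuotientGroup.eq_one_iff]
      exact hbasic i j
  · rintro _ ⟨i, j, -, rfl⟩
    exact commutator_mem_commutator (mem_top _) (mem_top _)

theorem Abelianization.closure_image_preimage_eq_top {H : Subgroup G} {T : Set G}
    (hT : closure T = H) : closure (Abelianization.of '' (H.subtype ⁻¹' T)) = ⊤ := by
  subst hT
  rw [← MonoidHom.map_closure, coe_subtype, closure_closure_coe_preimage,
    map_top_of_surjective _ QuotientGroup.mk_surjective]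

theorem statement15_general (r : ℕ) :
    Subgroup.closure
      { v : Abelianization (commutator (FreeGroup (Fin r))) |
        ∃ (i j : Fin r) (g : FreeGroup (Fin r)), i < j ∧
          v = Abelianization.of
            ⟨g * ⁅FreeGroup.of i, FreeGroup.of j⁆ * g⁻¹,
              conj_comm_mem15 g (FreeGroup.of i) (FreeGroup.of j)⟩ } = ⊤ := by
  have hconj := (commutator_eq_normalClosure_of_closure_range_eq_top
    (FreeGroup.closure_range_of (Fin r))).symm
  convert Abelianization.closure_image_preimage_eq_top hconj using 2
  ext v
  constructor
  · rintro ⟨i, j, g, hij, rfl⟩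
    exact ⟨_, Group.mem_conjugatesOfSet_iff.2 ⟨_, ⟨i, j, hij, rfl⟩, isConj_iff.2 ⟨g, rfl⟩⟩, rfl⟩
  · rintro ⟨⟨y, hy⟩, hconjugate, rfl⟩
    obtain ⟨_, ⟨i, j, hij, rfl⟩, hc⟩ := Group.mem_conjugatesOfSet_iff.1 hconjugate
    obtain ⟨g, rfl⟩ := isConj_iff.1 hc
    exact ⟨i, j, g, hij, rfl⟩

/-- for the free group `G = F_r` (`r ≥ 2`), the Alexander invariant
`M = G'/G''` is generated, as a module over `ℤ[G/G'] ≅ ℤ[t₁^{±1},…,t_r^{±1}]` (where the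
ring acts through conjugation by group elements), by the classes of the commutators
`x_{ij} = [x_i, x_j]`, `1 ≤ i < j ≤ r`: i.e. the classes of all conjugates
`g[x_i,x_j]g⁻¹` generate `M = Abelianization G'` as a group. -/
theorem statement15 (r : ℕ) (hr : 2 ≤ r) :
    Subgroup.closure
      { v : Abelianization (commutator (FreeGroup (Fin r))) |
        ∃ (i j : Fin r) (g : FreeGroup (Fin r)), i < j ∧
          v = Abelianization.of
            ⟨g * ⁅FreeGroup.of i, FreeGroup.of j⁆ * g⁻¹,
              conj_comm_mem15 g (FreeGroup.of i) (FreeGroup.of j)⟩ } = ⊤ :=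
  statement15_general r
end
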